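/- Let α ∈ (−1,0) and j₁ > 0. Then ∫_{tr(j₁,0)} ‖x‖^{2α} dx = (√2 · j₁^{2α+2})/(4(α+1)) · ₂F₁(1/2, 3/2+α; 3/2; 1/2). -/

import Mathlib

open MeasureTheory Filter Set Real

noncomputable section

abbrev E2 : Type := EuclideanSpace ℝ (Fin 2)

/-- The triangle `tr(a,b) = {(x₁,x₂) : b ≤ x₁ ≤ a, b ≤ x₂ ≤ x₁}`. -/
def tri (a b : ℝ) : Set E2 :=
  {x : E2 | b ≤ x 0 ∧ x 0 ≤ a ∧ b ≤ x 1 ∧ x 1 ≤ x 0}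

/-- The Gauss hypergeometric function `₂F₁(a,b;c;z) = Σₖ (a)ₖ(b)ₖ/(c)ₖ · zᵏ/k!`,
where `(q)ₖ` is the (ascending) Pochhammer symbol. -/
def hyp2F1 (a b c z : ℝ) : ℝ :=
  ∑' k : ℕ, ((ascPochhammer ℝ k).eval a * (ascPochhammer ℝ k).eval b /
    (ascPochhammer ℝ k).eval c) * z ^ k / (k.factorial : ℝ)

/-!
Integrating first in `x₂`, homogeneity gives `∫₀^{x₁} (x₁² + x₂²)^α dx₂ = x₁^{2α+1} C` with
`C = ∫₀¹ (1 + t²)^α dt`, and then `∫_{tr(j₁,0)} ‖x‖^{2α} = C j₁^{2α+2} / (2α+2)`.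
The substitution `t = s / √(2 - s²)` turns `C` into
`2^{-1/2} ∫₀¹ (1 - s²/2)^{-(3/2+α)} ds`. Expanding the integrand by the binomial series and
integrating term by term gives `Σₖ (3/2+α)ₖ 2^{-k} / (k! (2k+1))`, which is
`₂F₁(1/2, 3/2+α; 3/2; 1/2)` because `(1/2)ₖ / (3/2)ₖ = 1 / (2k+1)`.
-/

open Polynomial Nat
open scoped Interval ENNReal

lemma Ring.choose_add_sub_one_eq_ascPochhammer_div (β : ℝ) (n : ℕ) :
    Ring.choose (β + n - 1) n = (ascPochhammer ℝ n).eval β / n ! := by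
  rw [← Ring.multichoose_eq, eq_div_iff (by positivity), mul_comm, ← nsmul_eq_mul,
    Ring.factorial_nsmul_multichoose_eq_ascPochhammer, ascPochhammer_smeval_cast,
    ascPochhammer_smeval_eq_eval]

lemma Real.mem_eball_zero_one_iff {x : ℝ} : x ∈ Metric.eball (0 : ℝ) 1 ↔ |x| < 1 := by
  simp [enorm_eq_nnnorm, ← NNReal.coe_lt_one]

lemma Real.hasFPowerSeriesOnBall_one_sub_rpow_neg (β : ℝ) :
    HasFPowerSeriesOnBall (fun x ↦ (1 - x) ^ (-β))
      (.ofScalars ℝ fun n ↦ (ascPochhammer ℝ n).eval β / n !) 0 1 := by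
  simp_rw [← Ring.choose_add_sub_one_eq_ascPochhammer_div]
  refine (Real.one_div_one_sub_rpow_hasFPowerSeriesOnBall_zero β).congr fun x hx ↦ ?_
  have : |x| < 1 := Real.mem_eball_zero_one_iff.mp hx
  simp only [Real.rpow_neg (by grind : 0 ≤ 1 - x), one_div]

theorem Real.hasSum_ascPochhammer_mul_pow_div_factorial (β : ℝ) {x : ℝ} (hx : |x| < 1) :
    HasSum (fun n ↦ (ascPochhammer ℝ n).eval β * x ^ n / n !) ((1 - x) ^ (-β)) := by
  have := (Real.hasFPowerSeriesOnBall_one_sub_rpow_neg β).hasSum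
    (Real.mem_eball_zero_one_iff.mpr hx)
  simp only [FormalMultilinearSeries.ofScalars_apply_eq, smul_eq_mul, zero_add] at this
  exact this.congr_fun fun n ↦ by ring

theorem Real.summable_abs_ascPochhammer_mul_pow_div_factorial (β : ℝ) {x : ℝ} (hx : |x| < 1) :
    Summable fun n ↦ |(ascPochhammer ℝ n).eval β * x ^ n / n !| := by
  have hp := Real.hasFPowerSeriesOnBall_one_sub_rpow_neg β
  have := FormalMultilinearSeries.summable_norm_apply _
    (Metric.eball_subset_eball hp.r_le (Real.mem_eball_zero_one_iff.mpr hx))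
  simp only [FormalMultilinearSeries.ofScalars_apply_eq, smul_eq_mul, norm_mul,
    Real.norm_eq_abs] at this
  exact this.congr fun n ↦ by rw [abs_div, abs_div, abs_mul]; ring

theorem hasSum_integral_one_sub_mul_sq_rpow_neg (β : ℝ) {c : ℝ} (hc : |c| < 1) :
    HasSum (fun n ↦ (ascPochhammer ℝ n).eval β * c ^ n / n ! / (2 * n + 1))
      (∫ s in (0 : ℝ)..1, (1 - c * s ^ 2) ^ (-β)) := by
  set a : ℕ → ℝ := fun n ↦ (ascPochhammer ℝ n).eval β * c ^ n / (n ! : ℝ)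
  have hsq : ∀ s ∈ Ι (0 : ℝ) 1, |s ^ 2| ≤ 1 := fun s hs ↦ by
    rw [uIoc_of_le zero_le_one] at hs
    rw [abs_of_nonneg (by positivity)]; nlinarith [hs.1, hs.2]
  have hsum := intervalIntegral.hasSum_integral_of_dominated_convergence (μ := volume)
    (F := fun n s ↦ a n * s ^ (2 * n)) (a := 0) (b := 1) (fun n _ ↦ |a n|)
    (fun n ↦ (by fun_prop : Continuous fun s : ℝ ↦ a n * s ^ (2 * n)).aestronglyMeasurable)
    (fun n ↦ ae_of_all _ fun s hs ↦ by
      rw [Real.norm_eq_abs, abs_mul, pow_mul]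
      exact mul_le_of_le_one_right (abs_nonneg _)
        (by rw [abs_pow]; exact pow_le_one₀ (abs_nonneg _) (hsq s hs)))
    (ae_of_all _ fun _ _ ↦ Real.summable_abs_ascPochhammer_mul_pow_div_factorial β hc)
    intervalIntegrable_const
    (ae_of_all _ fun s hs ↦ by
      have hcs : |c * s ^ 2| < 1 := by
        rw [abs_mul]; exact (mul_le_of_le_one_right (abs_nonneg c) (hsq s hs)).trans_lt hc
      refine (Real.hasSum_ascPochhammer_mul_pow_div_factorial β hcs).congr_fun fun n ↦ ?_
      simp only [a, mul_pow, pow_mul]; ring)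
  refine hsum.congr_fun fun n ↦ ?_
  simp only [intervalIntegral.integral_const_mul, integral_pow]
  push_cast; ring

lemma hasDerivAt_div_sqrt_two_sub_sq {s : ℝ} (hs : 0 < 2 - s ^ 2) :
    HasDerivAt (fun s ↦ s / √(2 - s ^ 2)) (2 / ((2 - s ^ 2) * √(2 - s ^ 2))) s := by
  have hsqrt : HasDerivAt (fun s ↦ √(2 - s ^ 2)) (-(2 * s) / (2 * √(2 - s ^ 2))) s := by
    simpa using ((hasDerivAt_pow 2 s).const_sub 2).sqrt hs.ne'
  have hw : 0 < √(2 - s ^ 2) := Real.sqrt_pos.mpr hs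
  refine ((hasDerivAt_id' s).div hsqrt hw.ne').congr_deriv ?_
  have hsq := Real.sq_sqrt hs.le
  field_simp
  nlinarith

/-- The substitution `t = s / √(2 - s²)`, under which `1 + t² = 2 / (2 - s²)`. -/
lemma integral_one_add_sq_rpow (α : ℝ) :
    ∫ t in (0 : ℝ)..1, (1 + t ^ 2) ^ α =
      (√2)⁻¹ * ∫ s in (0 : ℝ)..1, (1 - 1 / 2 * s ^ 2) ^ (-(3 / 2 + α)) := by
  have hw : ∀ s ∈ uIcc (0 : ℝ) 1, 0 < 2 - s ^ 2 := fun s hs ↦ by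
    rw [uIcc_of_le zero_le_one] at hs; nlinarith [hs.1, hs.2]
  have hsubst := intervalIntegral.integral_comp_mul_deriv (g := fun t ↦ (1 + t ^ 2) ^ α)
    (fun s hs ↦ hasDerivAt_div_sqrt_two_sub_sq (hw s hs))
    (continuousOn_const.div (by fun_prop) fun s hs ↦
      (mul_pos (hw s hs) (Real.sqrt_pos.mpr (hw s hs))).ne')
    ((continuous_const.add (continuous_pow 2)).rpow_const fun t ↦
      Or.inl (by positivity : (0 : ℝ) < 1 + t ^ 2).ne')
  norm_num at hsubst
  rw [← hsubst, ← intervalIntegral.integral_const_mul]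
  refine intervalIntegral.integral_congr fun s hs ↦ ?_
  have hws := hw s hs
  set w := 2 - s ^ 2
  have h1 : 1 + (s / √w) ^ 2 = 2 / w := by
    rw [div_pow, Real.sq_sqrt hws.le]; field_simp; ring
  have h2 : 1 - 1 / 2 * s ^ 2 = (2 / w)⁻¹ := by
    rw [inv_div]; ring
  have h3 : (2 / w) ^ (3 / 2 : ℝ) = 2 / w * (√2 / √w) := by
    rw [show (3 / 2 : ℝ) = 1 + 1 / 2 by norm_num, Real.rpow_add (by positivity), Real.rpow_one,
      ← Real.sqrt_eq_rpow, Real.sqrt_div' _ hws.le]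
  rw [h1, h2, Real.inv_rpow (by positivity), ← Real.rpow_neg (by positivity), neg_neg,
    Real.rpow_add (by positivity), h3]
  field_simp

lemma setLIntegral_tri {f : ℝ × ℝ → ℝ≥0∞} (hf : Measurable f) (a b : ℝ) :
    ∫⁻ x in tri a b, f (x 0, x 1) = ∫⁻ x₁ in Icc b a, ∫⁻ x₂ in Icc b x₁, f (x₁, x₂) := by
  let ρ : E2 ≃ᵐ ℝ × ℝ := (MeasurableEquiv.toLp 2 (Fin 2 → ℝ)).symm.trans .finTwoArrow
  have hρ : MeasurePreserving ρ := (volume_preserving_finTwoArrow ℝ).comp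
    (EuclideanSpace.volume_preserving_symm_measurableEquiv_toLp (Fin 2))
  let S : Set (ℝ × ℝ) := {p | b ≤ p.1 ∧ p.1 ≤ a ∧ b ≤ p.2 ∧ p.2 ≤ p.1}
  have hS : MeasurableSet S := by
    simp only [S, ofPred_and]
    exact (measurableSet_le measurable_const measurable_fst).inter
      ((measurableSet_le measurable_fst measurable_const).inter
      ((measurableSet_le measurable_const measurable_snd).inter
      (measurableSet_le measurable_snd measurable_fst)))
  change ∫⁻ x in ρ ⁻¹' S, f (ρ x) = _
  rw [hρ.setLIntegral_comp_preimage_emb ρ.measurableEmbedding, ← lintegral_indicator hS,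
    Measure.volume_eq_prod, lintegral_prod _ (hf.indicator hS).aemeasurable,
    ← lintegral_indicator measurableSet_Icc]
  congr 1 with x₁
  by_cases hx₁ : x₁ ∈ Icc b a
  · rw [indicator_of_mem hx₁, ← lintegral_indicator measurableSet_Icc]
    congr 1 with x₂
    simp only [indicator_apply, S, mem_ofPred_eq, mem_Icc, hx₁.1, hx₁.2, true_and]
  · rw [indicator_of_notMem hx₁]
    simp only [indicator_of_notMem (fun h ↦ hx₁ ⟨h.1, h.2.1⟩ : (x₁, _) ∉ S), lintegral_zero]

lemma integral_sq_add_sq_rpow (α : ℝ) {x : ℝ} (hx : 0 < x) :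
    ∫ y in (0 : ℝ)..x, (x ^ 2 + y ^ 2) ^ α =
      x ^ (2 * α + 1) * ∫ t in (0 : ℝ)..1, (1 + t ^ 2) ^ α := by
  have hscale := intervalIntegral.mul_integral_comp_mul_left (f := fun y ↦ (x ^ 2 + y ^ 2) ^ α)
    (a := 0) (b := 1) x
  rw [mul_zero, mul_one] at hscale
  have hhom : ∀ t : ℝ, (x ^ 2 + (x * t) ^ 2) ^ α = x ^ (2 * α) * (1 + t ^ 2) ^ α := fun t ↦ by
    rw [show x ^ 2 + (x * t) ^ 2 = x ^ 2 * (1 + t ^ 2) by ring,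
      Real.mul_rpow (by positivity) (by positivity), Real.rpow_mul hx.le, Real.rpow_two]
  simp only [hhom, intervalIntegral.integral_const_mul] at hscale
  rw [← hscale, Real.rpow_add_one hx.ne']
  ring

lemma setLIntegral_Ioc_ofReal_eq {f : ℝ → ℝ} {a b : ℝ} (hab : a ≤ b)
    (hf : IntervalIntegrable f volume a b) (hf₀ : ∀ x ∈ Ioc a b, 0 ≤ f x) :
    ∫⁻ x in Ioc a b, ENNReal.ofReal (f x) = ENNReal.ofReal (∫ x in a..b, f x) := by
  rw [intervalIntegral.integral_of_le hab, ofReal_integral_eq_lintegral_ofReal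
    ((intervalIntegrable_iff_integrableOn_Ioc_of_le hab).mp hf)
    ((ae_restrict_iff' measurableSet_Ioc).mpr (ae_of_all _ hf₀))]

lemma E2.norm_rpow_two_mul (x : E2) (α : ℝ) :
    ‖x‖ ^ (2 * α) = (x 0 ^ 2 + x 1 ^ 2) ^ α := by
  rw [Real.rpow_mul (norm_nonneg x), Real.rpow_two, EuclideanSpace.norm_sq_eq, Fin.sum_univ_two,
    Real.norm_eq_abs, Real.norm_eq_abs, sq_abs, sq_abs]

lemma integral_tri_norm_rpow {α : ℝ} (hα : -1 < α) {j : ℝ} (hj : 0 < j) :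
    ∫ x in tri j 0, ‖x‖ ^ (2 * α) =
      (∫ t in (0 : ℝ)..1, (1 + t ^ 2) ^ α) * j ^ (2 * α + 2) / (2 * α + 2) := by
  set C := ∫ t in (0 : ℝ)..1, (1 + t ^ 2) ^ α
  have hC : 0 ≤ C := intervalIntegral.integral_nonneg zero_le_one fun t _ ↦ by positivity
  have hinner : ∀ x ∈ Ioc 0 j, ∫⁻ y in Icc 0 x, ENNReal.ofReal ((x ^ 2 + y ^ 2) ^ α) =
      ENNReal.ofReal (x ^ (2 * α + 1) * C) := by
    intro x hx
    have hcont : Continuous fun y : ℝ ↦ (x ^ 2 + y ^ 2) ^ α :=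
      (continuous_const.add (continuous_pow 2)).rpow_const fun y ↦
        Or.inl (by nlinarith [hx.1, sq_nonneg y] : x ^ 2 + y ^ 2 ≠ 0)
    rw [← Measure.restrict_congr_set Ioc_ae_eq_Icc, setLIntegral_Ioc_ofReal_eq hx.1.le
      (hcont.intervalIntegrable _ _) (fun y _ ↦ by positivity), integral_sq_add_sq_rpow α hx.1]
  have houter :
      ∫ x in (0 : ℝ)..j, x ^ (2 * α + 1) * C = C * j ^ (2 * α + 2) / (2 * α + 2) := by
    rw [intervalIntegral.integral_mul_const, integral_rpow (Or.inl (by linarith)),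
      Real.zero_rpow (by linarith), show 2 * α + 1 + 1 = 2 * α + 2 by ring]
    ring
  have hlint : ∫⁻ x in tri j 0, ENNReal.ofReal (‖x‖ ^ (2 * α)) =
      ENNReal.ofReal (C * j ^ (2 * α + 2) / (2 * α + 2)) := by
    simp only [E2.norm_rpow_two_mul]
    rw [setLIntegral_tri (f := fun p ↦ ENNReal.ofReal ((p.1 ^ 2 + p.2 ^ 2) ^ α)) (by fun_prop),
      ← Measure.restrict_congr_set Ioc_ae_eq_Icc, setLIntegral_congr_fun measurableSet_Ioc hinner,
      setLIntegral_Ioc_ofReal_eq hj.le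
        ((intervalIntegral.intervalIntegrable_rpow' (by linarith)).mul_const C)
        (fun x hx ↦ mul_nonneg (Real.rpow_nonneg hx.1.le _) hC), houter]
  rw [integral_eq_lintegral_of_nonneg_ae (ae_of_all _ fun x ↦ by positivity)
    (measurable_norm.pow_const _).aestronglyMeasurable, hlint,
    ENNReal.toReal_ofReal (div_nonneg (by positivity) (by linarith))]

lemma ascPochhammer_eval_add_one_mul {R : Type*} [CommSemiring R] (a : R) (k : ℕ) :
    a * (ascPochhammer R k).eval (a + 1) = (ascPochhammer R k).eval a * (a + k) := by
  induction k with
  | zero => simp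
  | succ k ih =>
    rw [ascPochhammer_succ_eval, ascPochhammer_succ_eval, ← mul_assoc, ih]
    push_cast
    ring

lemma hyp2F1_half_three_halves (b z : ℝ) :
    hyp2F1 (1 / 2) b (3 / 2) z =
      ∑' k : ℕ, (ascPochhammer ℝ k).eval b * z ^ k / k ! / (2 * k + 1) := by
  refine tsum_congr fun k ↦ ?_
  have h := ascPochhammer_eval_add_one_mul (1 / 2 : ℝ) k
  have hpos := ascPochhammer_pos k (1 / 2 : ℝ) (by norm_num)
  rw [show (1 / 2 + 1 : ℝ) = 3 / 2 by norm_num] at h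
  rw [show (ascPochhammer ℝ k).eval (3 / 2) = (ascPochhammer ℝ k).eval (1 / 2) * (2 * k + 1) by
    linear_combination 2 * h]
  field_simp

theorem stmt16 (α : ℝ) (hα : α ∈ Set.Ioo (-1 : ℝ) 0) (j₁ : ℝ) (hj₁ : 0 < j₁) :
    (∫ x in tri j₁ 0, ‖x‖ ^ (2 * α)) =
      (Real.sqrt 2 * j₁ ^ (2 * α + 2)) / (4 * (α + 1)) *
        hyp2F1 (1 / 2) (3 / 2 + α) (3 / 2) (1 / 2) := by
  rw [integral_tri_norm_rpow hα.1 hj₁, integral_one_add_sq_rpow, hyp2F1_half_three_halves,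
    ← (hasSum_integral_one_sub_mul_sq_rpow_neg (3 / 2 + α) (c := 1 / 2) (by norm_num)).tsum_eq]
  have hα₁ : α + 1 ≠ 0 := by linarith [hα.1]
  field_simp
  rw [Real.sq_sqrt zero_le_two]
  ring

end
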